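/- Define φ_ℓ(z) := ∫_{−1}^{1} P_ℓ(y)/(y+z) dy for z > 1. Then for every odd positive integer ℓ and every z > 1 one has φ_ℓ(z) < φ_{ℓ+2}(z) < 0; in particular φ₁(z) < φ₃(z) < φ₅(z) < ⋯ < 0. -/

import Mathlib

/-!
Rodrigues' formula and `ℓ`-fold integration by parts against `1 / (y + z)` (the boundary terms
vanish because `±1` are `ℓ`-fold roots of `(y² - 1)^ℓ`) give
`φ_ℓ(z) = (-1/2)^ℓ ∫_{-1}^{1} (1 - y²)^ℓ / (y + z)^(ℓ+1) dy`.
For odd `ℓ` the prefactor is negative and the integral positive. Since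
`0 < (1 - y²) / (y + z) < 2` on `(-1, 1)`, the integrand for `ℓ + 2` is less than four times
the one for `ℓ`, which is exactly `φ_ℓ(z) < φ_{ℓ+2}(z)`.
-/

noncomputable section

/-- The `ℓ`-th Legendre polynomial via the Rodrigues formula. -/
def legendreP (l : ℕ) (y : ℝ) : ℝ :=
  (1 / ((2 : ℝ) ^ l * (Nat.factorial l : ℝ))) *
    iteratedDeriv l (fun t : ℝ => (t ^ 2 - 1) ^ l) y

/-- `φ_ℓ(z) = ∫_{−1}^{1} P_ℓ(y)/(y+z) dy` for `z > 1`. -/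
def phiL (l : ℕ) (z : ℝ) : ℝ :=
  ∫ y in (-1 : ℝ)..1, legendreP l y / (y + z)

open Polynomial Set intervalIntegral Nat
open scoped Interval

theorem Polynomial.iteratedDeriv_eval {𝕜 : Type*} [NontriviallyNormedField 𝕜] (p : 𝕜[X])
    (n : ℕ) : iteratedDeriv n (fun y => p.eval y) = fun y => (derivative^[n] p).eval y := by
  induction n with
  | zero => simp
  | succ n ih =>
    rw [iteratedDeriv_succ, ih, Function.iterate_succ_apply']
    funext y
    exact Polynomial.deriv _

theorem Polynomial.IsRoot.iterate_derivative_pow {R : Type*} [CommRing R] {p : R[X]} {t : R}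
    (ht : p.IsRoot t) {j n : ℕ} (hj : j < n) : (derivative^[j] (p ^ n)).IsRoot t := by
  obtain ⟨q, hq⟩ := pow_sub_dvd_iterate_derivative_pow p n j
  rw [IsRoot, hq, eval_mul, eval_pow, ht.eq_zero, zero_pow (by omega), zero_mul]

section IntegrationByParts

variable {a b z : ℝ}

theorem integral_derivative_div_pow (hz : ∀ y ∈ [[a, b]], y + z ≠ 0) {q : ℝ[X]}
    (ha : q.IsRoot a) (hb : q.IsRoot b) (m : ℕ) :
    ∫ y in a..b, (derivative q).eval y / (y + z) ^ m =
      m * ∫ y in a..b, q.eval y / (y + z) ^ (m + 1) := by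
  have hpow : ∀ y : ℝ, ∀ k : ℕ, (y + z) ^ (-(k : ℤ)) = ((y + z) ^ k)⁻¹ := fun y k => by
    rw [zpow_neg, zpow_natCast]
  have hv : ∀ y ∈ [[a, b]], HasDerivAt (fun y => (y + z) ^ (-(m : ℤ)))
      (-(m : ℝ) * (y + z) ^ (-(m : ℤ) - 1)) y := fun y hy => by
    simpa using (hasDerivAt_zpow (-(m : ℤ)) _ (Or.inl (hz y hy))).comp_add_const y z
  have hcont : ∀ k : ℤ, ContinuousOn (fun y => (y + z) ^ k) [[a, b]] := fun k =>
    (continuousOn_id.add continuousOn_const).zpow₀ k fun y hy => Or.inl (hz y hy)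
  have hibp := integral_mul_deriv_eq_deriv_mul hv (fun y _ => q.hasDerivAt y)
    ((hcont _).const_smul (-(m : ℝ))).intervalIntegrable
    (q.derivative.continuous.continuousOn).intervalIntegrable
  rw [ha.eq_zero, hb.eq_zero, mul_zero, mul_zero, sub_zero, zero_sub] at hibp
  calc ∫ y in a..b, (derivative q).eval y / (y + z) ^ m
      = ∫ y in a..b, (y + z) ^ (-(m : ℤ)) * (derivative q).eval y :=
        integral_congr fun y _ => by rw [hpow]; ring
    _ = -∫ y in a..b, -(m : ℝ) * (y + z) ^ (-(m : ℤ) - 1) * q.eval y := hibp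
    _ = m * ∫ y in a..b, q.eval y / (y + z) ^ (m + 1) := by
      rw [← integral_const_mul, ← integral_neg]
      refine integral_congr fun y _ => ?_
      rw [show -(m : ℤ) - 1 = -((m + 1 : ℕ) : ℤ) by push_cast; ring, hpow]
      ring

theorem integral_iterate_derivative_div (hz : ∀ y ∈ [[a, b]], y + z ≠ 0) {n : ℕ} {p : ℝ[X]}
    (ha : ∀ j < n, (derivative^[j] p).IsRoot a) (hb : ∀ j < n, (derivative^[j] p).IsRoot b) :
    ∫ y in a..b, (derivative^[n] p).eval y / (y + z) =
      n ! * ∫ y in a..b, p.eval y / (y + z) ^ (n + 1) := by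
  induction n generalizing p with
  | zero => simp
  | succ n ih =>
    have ha₀ : p.IsRoot a := ha 0 n.succ_pos
    have hb₀ : p.IsRoot b := hb 0 n.succ_pos
    rw [Function.iterate_succ_apply, ih (fun j hj => ha (j + 1) (by omega))
      (fun j hj => hb (j + 1) (by omega)), integral_derivative_div_pow hz ha₀ hb₀,
      factorial_succ]
    push_cast
    ring

end IntegrationByParts

def rodriguesMoment (l : ℕ) (z : ℝ) : ℝ :=
  ∫ y in (-1 : ℝ)..1, (1 - y ^ 2) ^ l / (y + z) ^ (l + 1)

theorem phiL_eq_rodriguesMoment (l : ℕ) {z : ℝ} (hz : ∀ y ∈ [[(-1 : ℝ), 1]], y + z ≠ 0) :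
    phiL l z = (-1 / 2) ^ l * rodriguesMoment l z := by
  have hroot : ∀ t : ℝ, t ^ 2 = 1 → ∀ j < l, (derivative^[j] ((X ^ 2 - 1 : ℝ[X]) ^ l)).IsRoot t :=
    fun t ht j hj => IsRoot.iterate_derivative_pow (by simp [ht]) hj
  have hP : (fun t : ℝ => (t ^ 2 - 1) ^ l) = fun t => ((X ^ 2 - 1 : ℝ[X]) ^ l).eval t := by
    simp
  have hibp := integral_iterate_derivative_div hz (hroot (-1) (by norm_num)) (hroot 1 (one_pow 2))
  simp only [eval_pow, eval_sub, eval_X, eval_one] at hibp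
  have hl : (l ! : ℝ) ≠ 0 := by positivity
  rw [phiL, rodriguesMoment]
  unfold legendreP
  simp_rw [hP, iteratedDeriv_eval, mul_div_assoc]
  rw [integral_const_mul, hibp, ← integral_const_mul, ← integral_const_mul, ← integral_const_mul]
  refine integral_congr fun y _ => ?_
  rw [show y ^ 2 - 1 = -1 * (1 - y ^ 2) by ring, mul_pow, div_pow]
  field_simp

section Moments

variable {z : ℝ}

theorem intervalIntegrable_rodriguesMoment (l : ℕ) (hz : 1 < z) :
    IntervalIntegrable (fun y => (1 - y ^ 2) ^ l / (y + z) ^ (l + 1))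
      MeasureTheory.volume (-1) 1 := by
  refine ContinuousOn.intervalIntegrable (ContinuousOn.div (by fun_prop) (by fun_prop) ?_)
  intro y hy
  rw [uIcc_of_le (by norm_num)] at hy
  exact pow_ne_zero _ (by linarith [hy.1])

theorem rodriguesMoment_pos (l : ℕ) (hz : 1 < z) : 0 < rodriguesMoment l z := by
  refine intervalIntegral_pos_of_pos_on (intervalIntegrable_rodriguesMoment l hz)
    (fun y hy => ?_) (by norm_num)
  have : 0 < 1 - y ^ 2 := by nlinarith [hy.1, hy.2]
  have : 0 < y + z := by linarith [hy.1]
  positivity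

theorem rodriguesMoment_add_two_lt (l : ℕ) (hz : 1 < z) :
    rodriguesMoment (l + 2) z < 4 * rodriguesMoment l z := by
  rw [rodriguesMoment, rodriguesMoment, ← integral_const_mul, ← sub_pos,
    ← integral_sub ((intervalIntegrable_rodriguesMoment l hz).const_mul 4)
      (intervalIntegrable_rodriguesMoment (l + 2) hz)]
  refine intervalIntegral_pos_of_pos_on
    (((intervalIntegrable_rodriguesMoment l hz).const_mul 4).sub
      (intervalIntegrable_rodriguesMoment (l + 2) hz)) (fun y hy => ?_) (by norm_num)
  have hw : 0 < 1 - y ^ 2 := by nlinarith [hy.1, hy.2]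
  have hyz : 0 < y + z := by linarith [hy.1]
  -- `(1 - y²) / (y + z) < 2` since `1 - y < 2` and `1 + y < y + z`.
  have hratio : (1 - y ^ 2) / (y + z) < 2 := by
    rw [div_lt_iff₀ hyz]; nlinarith [hy.1, hy.2]
  have hsq : ((1 - y ^ 2) / (y + z)) ^ 2 < 4 := by nlinarith [div_pos hw hyz]
  have hsplit : (1 - y ^ 2) ^ (l + 2) / (y + z) ^ (l + 2 + 1) =
      (1 - y ^ 2) ^ l / (y + z) ^ (l + 1) * ((1 - y ^ 2) / (y + z)) ^ 2 := by
    field_simp; ring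
  rw [hsplit, sub_pos]
  have : 0 < (1 - y ^ 2) ^ l / (y + z) ^ (l + 1) := by positivity
  nlinarith

end Moments

theorem phiL_odd_increasing_in_ell_general
    (l : ℕ) (hodd : Odd l) (z : ℝ) (hz : 1 < z) :
    phiL l z < phiL (l + 2) z ∧ phiL (l + 2) z < 0 := by
  have hz' : ∀ y ∈ [[(-1 : ℝ), 1]], y + z ≠ 0 := fun y hy => by
    rw [uIcc_of_le (by norm_num)] at hy
    linarith [hy.1]
  rw [phiL_eq_rodriguesMoment l hz', phiL_eq_rodriguesMoment (l + 2) hz',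
    pow_add, show (-1 / 2 : ℝ) ^ 2 = 1 / 4 by norm_num]
  have hsign : (-1 / 2 : ℝ) ^ l < 0 := hodd.pow_neg (by norm_num)
  have hpos := rodriguesMoment_pos (l + 2) hz
  have hlt := rodriguesMoment_add_two_lt l hz
  constructor <;> nlinarith

/-- For every odd positive integer `ℓ` and `z > 1` one has `φ_ℓ(z) < φ_{ℓ+2}(z) < 0`;
in particular `φ₁(z) < φ₃(z) < φ₅(z) < ⋯ < 0`. -/
theorem phiL_odd_increasing_in_ell
    (l : ℕ) (hodd : Odd l) (hpos : 0 < l) (z : ℝ) (hz : 1 < z) :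
    phiL l z < phiL (l + 2) z ∧ phiL (l + 2) z < 0 :=
  phiL_odd_increasing_in_ell_general l hodd z hz

end
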